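/- (Lemma: new non-trivial stabilizers after a single-qubit measurement.) Apply the measurement-update rules for a single-qubit Pauli measurement M on qubit q with anticommuting generator K_a. Then for every subset c ⊆ {1,…,n} with a ∉ c: if S_c is trivial with respect to the original generators K₁,…,K_n and the updated stabilizer S_c' is non-trivial with respect to the updated generators K₁',…,K_n', then S_{c ∪ {a}} is non-trivial with respect to the original generators. Equivalently, every stabilizer that is newly non-trivial after the measurement is contained in the set { S_c : a ∉ c, S_{c∪{a}} non-trivial before the measurement }. -/

import Mathlib

open Matrix

noncomputable section

/-- Operators on the Hilbert space of qubits indexed by `ι`, as matrices. -/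
abbrev QOp (ι : Type*) := Matrix (ι → Fin 2) (ι → Fin 2) ℂ

def Xmat : Matrix (Fin 2) (Fin 2) ℂ := !![0, 1; 1, 0]
def Ymat : Matrix (Fin 2) (Fin 2) ℂ := !![0, -Complex.I; Complex.I, 0]
def Zmat : Matrix (Fin 2) (Fin 2) ℂ := !![1, 0; 0, -1]

/-- `P` is a 2×2 Pauli matrix (including the identity). -/
def IsPauliMat (P : Matrix (Fin 2) (Fin 2) ℂ) : Prop :=
  P = 1 ∨ P = Xmat ∨ P = Ymat ∨ P = Zmat

/-- `c` is an allowed Pauli phase. -/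
def IsPhase (c : ℂ) : Prop :=
  c = 1 ∨ c = -1 ∨ c = Complex.I ∨ c = -Complex.I

/-- The operator `c • P₀ ⊗ ⋯ ⊗ P_{n-1}` with entries `c * ∏ i, P i (a i) (b i)`. -/
def pauliTensor {ι : Type*} [Fintype ι] (c : ℂ)
    (P : ι → Matrix (Fin 2) (Fin 2) ℂ) : QOp ι :=
  Matrix.of fun a b => c * ∏ i, P i (a i) (b i)

/-- `A` is an n-qubit Pauli tensor. -/
def IsPauliTensor {ι : Type*} [Fintype ι] (A : QOp ι) : Prop :=
  ∃ (c : ℂ) (P : ι → Matrix (Fin 2) (Fin 2) ℂ),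
    IsPhase c ∧ (∀ i, IsPauliMat (P i)) ∧ A = pauliTensor c P

/-- `A` acts trivially on qubit `q`, i.e. `A = I_q ⊗ B`: entrywise, the `(x,y)` block
of `A` with respect to qubit `q` equals `δ_{x y}` times a fixed block. -/
def ActsTriviallyOn {ι : Type*} [DecidableEq ι] (A : QOp ι) (q : ι) : Prop :=
  ∀ (a b : ι → Fin 2) (x y : Fin 2),
    A (Function.update a q x) (Function.update b q y) =
      (if x = y then 1 else 0) * A (Function.update a q 0) (Function.update b q 0)

/-- The qubit support of an operator: those qubits on which it does not act trivially. -/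
def qsupp {ι : Type*} [DecidableEq ι] (A : QOp ι) : Set ι :=
  {q | ¬ ActsTriviallyOn A q}

/-- Ordered product `∏_{i ∈ c} f i` taken in increasing index order. -/
def finOProd {m : ℕ} {α : Type*} [Monoid α] (c : Finset (Fin m)) (f : Fin m → α) : α :=
  ((c.sort (· ≤ ·)).map f).prod

/-- The stabilizer `S_c = ∏_{i ∈ c} K i` (in increasing index order). -/
def stabProd {n : ℕ} (K : Fin n → QOp (Fin n)) (c : Finset (Fin n)) : QOp (Fin n) :=
  finOProd c K

/-- The stabilizer `S_c` is trivial with respect to the generators `K`. -/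
def IsTrivial {n : ℕ} (K : Fin n → QOp (Fin n)) (c : Finset (Fin n)) : Prop :=
  ∃ α β : Finset (Fin n), α.Nonempty ∧ β.Nonempty ∧ Disjoint α β ∧ α ∪ β = c ∧
    qsupp (stabProd K α) ∩ qsupp (stabProd K β) = ∅

/-- The single-qubit operator `u` acting on qubit `q` (identity elsewhere). -/
def embed1 {ι : Type*} [Fintype ι] [DecidableEq ι]
    (u : Matrix (Fin 2) (Fin 2) ℂ) (q : ι) : QOp ι :=
  Matrix.of fun a b =>
    u (a q) (b q) * ∏ i ∈ Finset.univ.erase q, (if a i = b i then (1 : ℂ) else 0)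

/-- The controlled-Z gate on qubits `u` and `v`. -/
def CZop {ι : Type*} [Fintype ι] [DecidableEq ι] (u v : ι) : QOp ι :=
  Matrix.diagonal fun a => if a u = 1 ∧ a v = 1 then (-1 : ℂ) else 1

/-!
Write every Pauli tensor, up to a phase, as `⊗ᵢ X^{xᵢ} Z^{zᵢ}` with a binary symplectic vector
`v = (xᵢ, zᵢ)ᵢ`: products add vectors, `qsupp` is the support of `v`, and two tensors commute or
anticommute according to the symplectic form of their vectors. In this language the update rules
say that the vector of `K_i'` is that of `K_i`, plus that of `K_a` when `K_i` anticommutes with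
`M`, with qubit `q` cleared.

Let `t(s) ∈ 𝔽₂` be the anticommutation parity of `S_s` with `M`. Take a split `c = γ ⊔ δ`
witnessing that `S_c` is trivial. If `t(γ) = t(δ) = 0`, the same split witnesses that `S_c'` is
trivial. Otherwise `t(c) = 1`; if `S_{c ∪ {a}}` were trivial via a split `α ⊔ β` with `a ∈ α`, then
`t(β) = 0` and `t(α \ {a}) = 1`, so the vectors of `S'_{α \ {a}}` and `S'_β` are those of `S_α` and
`S_β` with qubit `q` cleared, and `α \ {a}, β` witnesses that `S_c'` is trivial.
-/

open Function

lemma eq_pi_single_of_support_subset {ι M : Type*} [DecidableEq ι] [Zero M] {f : ι → M} {q : ι}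
    (h : support f ⊆ {q}) : f = Pi.single q (f q) := by
  ext1 j
  by_cases hj : j = q
  · subst hj; simp
  · rw [Pi.single_eq_of_ne hj]
    exact notMem_support.mp fun hf => hj (h hf)

abbrev PauliLabel := ZMod 2 × ZMod 2

lemma ZMod.two_cases (t : ZMod 2) : t = 0 ∨ t = 1 := by decide +revert

lemma pauliLabel_add_self (u : PauliLabel) : u + u = 0 := by decide +revert

def signChar : AddChar (ZMod 2) ℂ := AddChar.zmodChar 2 (ζ := -1) (by norm_num)

@[simp] lemma signChar_zero : signChar 0 = 1 := AddChar.map_zero_eq_one _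

@[simp] lemma signChar_one : signChar 1 = -1 := by
  simpa [signChar] using AddChar.zmodChar_apply' (n := 2) (ζ := (-1 : ℂ)) (by norm_num) 1

lemma signChar_ne_zero (t : ZMod 2) : signChar t ≠ 0 := by
  obtain rfl | rfl := t.two_cases <;> simp

def symp (u v : PauliLabel) : ZMod 2 := u.2 * v.1 + u.1 * v.2

@[simp] lemma symp_zero_left (v : PauliLabel) : symp 0 v = 0 := by simp [symp]

@[simp] lemma symp_zero_right (u : PauliLabel) : symp u 0 = 0 := by simp [symp]

lemma symp_add_right (u v w : PauliLabel) : symp u (v + w) = symp u v + symp u w := by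
  simp only [symp, Prod.fst_add, Prod.snd_add]
  ring

lemma eq_zero_or_eq_of_symp_eq_zero {m v : PauliLabel} (hm : m ≠ 0) (h : symp m v = 0) :
    v = 0 ∨ v = m := by
  decide +revert

/-- Binary symplectic encoding: the label `(x, z)` stands for `X^x Z^z`, so `Y = i • (X * Z)`. -/
def pauliMat (u : PauliLabel) : Matrix (Fin 2) (Fin 2) ℂ :=
  (if u.1 = 0 then 1 else Xmat) * (if u.2 = 0 then 1 else Zmat)

@[simp] lemma pauliMat_zero : pauliMat 0 = 1 := by simp [pauliMat]

lemma pauliMat_mul (u v : PauliLabel) :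
    pauliMat u * pauliMat v = signChar (u.2 * v.1) • pauliMat (u + v) := by
  obtain ⟨u₁, u₂⟩ := u
  obtain ⟨v₁, v₂⟩ := v
  obtain rfl | rfl := u₁.two_cases <;> obtain rfl | rfl := u₂.two_cases <;>
    obtain rfl | rfl := v₁.two_cases <;> obtain rfl | rfl := v₂.two_cases <;>
  · ext i j
    fin_cases i <;> fin_cases j <;>
      simp [pauliMat, Xmat, Zmat, Matrix.mul_apply, Fin.sum_univ_two, Matrix.one_apply,
        show (1 + 1 : ZMod 2) = 0 from rfl]

lemma pauliMat_mul_comm (u v : PauliLabel) :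
    pauliMat u * pauliMat v = signChar (symp u v) • (pauliMat v * pauliMat u) := by
  obtain ⟨u₁, u₂⟩ := u
  obtain ⟨v₁, v₂⟩ := v
  obtain rfl | rfl := u₁.two_cases <;> obtain rfl | rfl := u₂.two_cases <;>
    obtain rfl | rfl := v₁.two_cases <;> obtain rfl | rfl := v₂.two_cases <;>
  · ext i j
    fin_cases i <;> fin_cases j <;>
      simp [symp, pauliMat, Xmat, Zmat, Matrix.mul_apply, Fin.sum_univ_two, Matrix.one_apply,
        show (1 + 1 : ZMod 2) = 0 from rfl]

lemma exists_pauliMat_apply_ne_zero (u : PauliLabel) (x : Fin 2) : ∃ y, pauliMat u x y ≠ 0 := by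
  obtain ⟨u₁, u₂⟩ := u
  obtain rfl | rfl := u₁.two_cases <;> obtain rfl | rfl := u₂.two_cases <;> fin_cases x <;>
    simp [pauliMat, Xmat, Zmat, Matrix.mul_apply, Fin.sum_univ_two, Matrix.one_apply,
      Fin.exists_fin_two]

lemma exists_pauliMat_apply_ne_of_ne_zero {u : PauliLabel} (hu : u ≠ 0) :
    ∃ x y, pauliMat u x y ≠ (if x = y then 1 else 0) * pauliMat u 0 0 := by
  obtain ⟨u₁, u₂⟩ := u
  obtain rfl | rfl := u₁.two_cases <;> obtain rfl | rfl := u₂.two_cases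
  · exact absurd rfl hu
  all_goals
    norm_num [pauliMat, Xmat, Zmat, Matrix.mul_apply, Fin.sum_univ_two, Fin.exists_fin_two]

lemma IsPauliMat.exists_eq_smul_pauliMat {P : Matrix (Fin 2) (Fin 2) ℂ} (h : IsPauliMat P) :
    ∃ d : ℂ, d ≠ 0 ∧ ∃ u, P = d • pauliMat u := by
  rcases h with rfl | rfl | rfl | rfl
  · exact ⟨1, one_ne_zero, 0, by simp⟩
  · exact ⟨1, one_ne_zero, (1, 0), by simp [pauliMat]⟩
  · refine ⟨Complex.I, Complex.I_ne_zero, (1, 1), ?_⟩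
    ext i j
    fin_cases i <;> fin_cases j <;> simp [pauliMat, Xmat, Ymat, Zmat]
  · exact ⟨1, one_ne_zero, (0, 1), by simp [pauliMat]⟩


section PauliTensor

variable {ι : Type*} [Fintype ι]

lemma smul_pauliTensor (c d : ℂ) (P : ι → Matrix (Fin 2) (Fin 2) ℂ) :
    c • pauliTensor d P = pauliTensor (c * d) P := by
  ext a b
  simp [pauliTensor, mul_assoc]

lemma pauliTensor_smul_factors (c : ℂ) (d : ι → ℂ) (P : ι → Matrix (Fin 2) (Fin 2) ℂ) :
    pauliTensor c (fun i => d i • P i) = pauliTensor (c * ∏ i, d i) P := by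
  ext a b
  simp [pauliTensor, Finset.prod_mul_distrib, mul_assoc]

lemma pauliTensor_one_one : pauliTensor 1 (fun _ : ι => 1) = 1 := by
  ext a b
  simp only [pauliTensor, Matrix.of_apply, one_mul, Matrix.one_apply]
  split_ifs with h
  · simp [h]
  · obtain ⟨i, hi⟩ := Function.ne_iff.mp h
    exact Finset.prod_eq_zero (Finset.mem_univ i) (by simp [hi])

variable [DecidableEq ι]

lemma pauliTensor_mul (c d : ℂ) (P Q : ι → Matrix (Fin 2) (Fin 2) ℂ) :
    pauliTensor c P * pauliTensor d Q = pauliTensor (c * d) (fun i => P i * Q i) := by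
  ext a b
  simp only [pauliTensor, Matrix.mul_apply, Matrix.of_apply]
  rw [Finset.prod_univ_sum (t := fun _ => Finset.univ), Fintype.piFinset_univ, Finset.mul_sum]
  refine Finset.sum_congr rfl fun x _ => ?_
  rw [Finset.prod_mul_distrib]
  ring

lemma pauliTensor_apply_update (c : ℂ) (P : ι → Matrix (Fin 2) (Fin 2) ℂ)
    (q : ι) (a b : ι → Fin 2) (x y : Fin 2) :
    pauliTensor c P (update a q x) (update b q y) =
      c * P q x y * ∏ i ∈ {q}ᶜ, P i (a i) (b i) := by
  rw [pauliTensor, Matrix.of_apply, Fintype.prod_eq_mul_prod_compl q, update_self, update_self,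
    mul_assoc]
  congr 2
  refine Finset.prod_congr rfl fun i hi => ?_
  have hiq : i ≠ q := by simpa using hi
  rw [update_of_ne hiq, update_of_ne hiq]

end PauliTensor

lemma signChar_sum {κ : Type*} (s : Finset κ) (f : κ → ZMod 2) :
    signChar (∑ i ∈ s, f i) = ∏ i ∈ s, signChar (f i) := by
  classical
  induction s using Finset.induction_on with
  | empty => simp
  | insert k s hk ih =>
    rw [Finset.sum_insert hk, Finset.prod_insert hk, AddChar.map_add_eq_mul, ih]

section HasPauliVec

variable {ι : Type*} [Fintype ι]

def HasPauliVec (A : QOp ι) (v : ι → PauliLabel) : Prop :=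
  ∃ c : ℂ, c ≠ 0 ∧ A = pauliTensor c (fun i => pauliMat (v i))

lemma IsPauliTensor.exists_hasPauliVec {A : QOp ι} (h : IsPauliTensor A) :
    ∃ v, HasPauliVec A v := by
  obtain ⟨c, P, hc, hP, rfl⟩ := h
  choose d hd u hu using fun i => (hP i).exists_eq_smul_pauliMat
  refine ⟨u, c * ∏ i, d i, ?_, ?_⟩
  · have hc0 : c ≠ 0 := by rcases hc with rfl | rfl | rfl | rfl <;> simp
    exact mul_ne_zero hc0 (Finset.prod_ne_zero_iff.mpr fun i _ => hd i)
  · rw [← pauliTensor_smul_factors, ← funext hu]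

def sympForm (v w : ι → PauliLabel) : ZMod 2 := ∑ i, symp (v i) (w i)

lemma sympForm_single_left [DecidableEq ι] (q : ι) (m : PauliLabel) (w : ι → PauliLabel) :
    sympForm (Pi.single q m) w = symp m (w q) := by
  rw [sympForm, Fintype.sum_eq_single q fun i hi => by simp [hi]]
  simp

namespace HasPauliVec

variable {A B : QOp ι} {v w : ι → PauliLabel}

lemma one : HasPauliVec (1 : QOp ι) 0 :=
  ⟨1, one_ne_zero, by simp [pauliTensor_one_one]⟩

lemma ne_zero (h : HasPauliVec A v) : A ≠ 0 := by
  obtain ⟨c, hc, rfl⟩ := h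
  choose y hy using fun i => exists_pauliMat_apply_ne_zero (v i) 0
  intro h0
  have := congrFun (congrFun h0 0) y
  simp only [pauliTensor, Matrix.of_apply, Matrix.zero_apply, Pi.zero_apply] at this
  exact mul_ne_zero hc (Finset.prod_ne_zero_iff.mpr fun i _ => hy i) this

variable [DecidableEq ι]

lemma mul (hA : HasPauliVec A v) (hB : HasPauliVec B w) : HasPauliVec (A * B) (v + w) := by
  obtain ⟨c, hc, rfl⟩ := hA
  obtain ⟨d, hd, rfl⟩ := hB
  refine ⟨c * d * ∏ i, signChar ((v i).2 * (w i).1), ?_, ?_⟩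
  · exact mul_ne_zero (mul_ne_zero hc hd)
      (Finset.prod_ne_zero_iff.mpr fun i _ => signChar_ne_zero _)
  · simp only [pauliTensor_mul, pauliMat_mul, pauliTensor_smul_factors, Pi.add_apply]

lemma mul_eq_smul_mul (hA : HasPauliVec A v) (hB : HasPauliVec B w) :
    A * B = signChar (sympForm v w) • (B * A) := by
  obtain ⟨c, hc, rfl⟩ := hA
  obtain ⟨d, hd, rfl⟩ := hB
  simp only [pauliTensor_mul, pauliMat_mul_comm _ (w _), pauliTensor_smul_factors,
    smul_pauliTensor, sympForm, signChar_sum]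
  ring_nf

lemma actsTriviallyOn_iff (h : HasPauliVec A v) (q : ι) : ActsTriviallyOn A q ↔ v q = 0 := by
  obtain ⟨c, hc, rfl⟩ := h
  refine ⟨fun htriv => ?_, fun hq a b x y => ?_⟩
  · by_contra hq
    obtain ⟨x, y, hxy⟩ := exists_pauliMat_apply_ne_of_ne_zero hq
    choose y' hy' using fun i => exists_pauliMat_apply_ne_zero (v i) 0
    have hR : c * ∏ i ∈ {q}ᶜ, pauliMat (v i) 0 (y' i) ≠ 0 :=
      mul_ne_zero hc (Finset.prod_ne_zero_iff.mpr fun i _ => hy' i)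
    have key := htriv 0 y' x y
    simp only [pauliTensor_apply_update, Pi.zero_apply] at key
    exact hxy (mul_right_cancel₀ hR (by linear_combination key))
  · simp only [pauliTensor_apply_update, hq, pauliMat_zero, Matrix.one_apply]
    split_ifs <;> simp

lemma qsupp_eq (h : HasPauliVec A v) : qsupp A = support v := by
  ext j
  simp [qsupp, h.actsTriviallyOn_iff j]

lemma mul_eq_mul_of_sympForm_eq_zero (hA : HasPauliVec A v) (hB : HasPauliVec B w)
    (h : sympForm v w = 0) : A * B = B * A := by
  simpa [h] using hA.mul_eq_smul_mul hB

lemma mul_eq_neg_mul_of_sympForm_eq_one (hA : HasPauliVec A v) (hB : HasPauliVec B w)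
    (h : sympForm v w = 1) : A * B = -(B * A) := by
  simpa [h] using hA.mul_eq_smul_mul hB

lemma sympForm_eq_one_of_mul_eq_neg_mul (hA : HasPauliVec A v) (hB : HasPauliVec B w)
    (h : A * B = -(B * A)) : sympForm v w = 1 := by
  refine (sympForm v w).two_cases.resolve_left fun h0 => (hB.mul hA).ne_zero ?_
  have h2 : (2 : ℂ) • (B * A) = 0 := by
    rw [two_smul]
    nth_rewrite 1 [← hA.mul_eq_mul_of_sympForm_eq_zero hB h0, h]
    exact neg_add_cancel _
  exact (smul_eq_zero.mp h2).resolve_left two_ne_zero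

lemma list_prod {κ : Type*} {K : κ → QOp ι} {v : κ → ι → PauliLabel} :
    ∀ l : List κ, (∀ i ∈ l, HasPauliVec (K i) (v i)) →
      HasPauliVec (l.map K).prod (l.map v).sum
  | [], _ => by simpa using one
  | i :: l, h => by
    simpa using
      (h i List.mem_cons_self).mul (list_prod l fun j hj => h j (List.mem_cons_of_mem _ hj))

lemma stabProd {n : ℕ} {K : Fin n → QOp (Fin n)} {v : Fin n → Fin n → PauliLabel}
    {c : Finset (Fin n)} (h : ∀ i ∈ c, HasPauliVec (K i) (v i)) :
    HasPauliVec (stabProd K c) (∑ i ∈ c, v i) := by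
  have hl := list_prod (c.sort (· ≤ ·)) fun i hi => h i ((Finset.mem_sort _).mp hi)
  rwa [((Finset.sort_perm_toList c _).map v).sum_eq, Finset.sum_map_toList] at hl

end HasPauliVec

end HasPauliVec

section Measurement

variable {ι : Type*}

lemma symp_eq_zero_or_of_disjoint_support {v v' : ι → PauliLabel}
    (h : Disjoint (support v) (support v')) (m : PauliLabel) (q : ι) :
    symp m (v q) = 0 ∨ symp m (v' q) = 0 := by
  by_cases hq : v q = 0
  · simp [hq]
  · right
    simp [notMem_support.mp (Set.disjoint_left.mp h (mem_support.mpr hq))]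

variable [DecidableEq ι]

/-- The measurement-update rules on Pauli vectors, for a measurement with Pauli vector
`Pi.single q m` and anticommuting generator of vector `w`: add `w` when `v` anticommutes with the
measurement, then clear qubit `q`. -/
def measUpdate (m : PauliLabel) (q : ι) (w : ι → PauliLabel) :
    (ι → PauliLabel) →+ (ι → PauliLabel) where
  toFun v := update (v + symp m (v q) • w) q 0
  map_zero' := by simp
  map_add' v v' := by
    ext1 j
    by_cases hj : j = q
    · simp [hj]
    · simp only [update_of_ne hj, Pi.add_apply, Pi.smul_apply, symp_add_right, add_smul]
      abel

lemma measUpdate_apply (m : PauliLabel) (q : ι) (w v : ι → PauliLabel) :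
    measUpdate m q w v = update (v + symp m (v q) • w) q 0 := rfl

lemma support_measUpdate_subset (m : PauliLabel) (q : ι) (w v : ι → PauliLabel) :
    support (measUpdate m q w v) ⊆ support (v + symp m (v q) • w) := by
  intro j hj
  by_cases hjq : j = q
  · simp [hjq, measUpdate_apply] at hj
  · simpa [measUpdate_apply, hjq] using hj

lemma support_measUpdate_subset_of_symp_eq_zero {m : PauliLabel} {q : ι} {v : ι → PauliLabel}
    (w : ι → PauliLabel) (h : symp m (v q) = 0) : support (measUpdate m q w v) ⊆ support v := by
  simpa [h] using support_measUpdate_subset m q w v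

lemma support_measUpdate_subset_of_symp_eq_one {m : PauliLabel} {q : ι} {v : ι → PauliLabel}
    (w : ι → PauliLabel) (h : symp m (v q) = 1) :
    support (measUpdate m q w v) ⊆ support (v + w) := by
  simpa [h] using support_measUpdate_subset m q w v

lemma eq_update_zero_of_single_add_eq_zero {m : PauliLabel} {q : ι} {x : ι → PauliLabel}
    (h : m + x q = 0) : Pi.single q m + x = update x q 0 := by
  ext1 j
  by_cases hj : j = q
  · subst hj; simpa using h
  · simp [hj]

variable [Fintype ι]

lemma HasPauliVec.of_measurement_rule {M X Y : QOp ι} {m : PauliLabel} {q : ι}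
    {x : ι → PauliLabel} (hM : HasPauliVec M (Pi.single q m)) (hm : m ≠ 0)
    (hX : HasPauliVec X x) (hx : symp m (x q) = 0)
    (h_mem : q ∈ qsupp (M * X) → Y = X) (h_not_mem : q ∉ qsupp (M * X) → Y = M * X) :
    HasPauliVec Y (update x q 0) := by
  have hMX := hM.mul hX
  -- `x q ∈ {0, m}`: the rule keeps `X` when `x q = 0` and multiplies by `M` when `x q = m`.
  by_cases hq : q ∈ qsupp (M * X)
  · have hxq : x q ≠ m := fun h => by
      simp [hMX.qsupp_eq, h, pauliLabel_add_self] at hq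
    have hxq0 : x q = 0 := (eq_zero_or_eq_of_symp_eq_zero hm hx).resolve_right hxq
    rwa [h_mem hq, update_eq_self_iff.mpr hxq0.symm]
  · rw [h_not_mem hq, ← eq_update_zero_of_single_add_eq_zero]
    · exact hMX
    · simpa [hMX.qsupp_eq] using hq

lemma HasPauliVec.measurement_update {M Ka Ki Ki' : QOp ι} {m : PauliLabel} {q : ι}
    {va vi : ι → PauliLabel}
    (hM : HasPauliVec M (Pi.single q m)) (hm : m ≠ 0) (hKa : HasPauliVec Ka va)
    (hKi : HasPauliVec Ki vi) (ha : symp m (va q) = 1)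
    (h₁ : M * Ki = -(Ki * M) → q ∈ qsupp (M * Ka * Ki) → Ki' = Ka * Ki)
    (h₂ : M * Ki = -(Ki * M) → q ∉ qsupp (M * Ka * Ki) → Ki' = M * (Ka * Ki))
    (h₃ : M * Ki = Ki * M → q ∈ qsupp (M * Ki) → Ki' = Ki)
    (h₄ : M * Ki = Ki * M → q ∉ qsupp (M * Ki) → Ki' = M * Ki) :
    HasPauliVec Ki' (measUpdate m q va vi) := by
  rcases (symp m (vi q)).two_cases with hi | hi
  · have hcomm := hM.mul_eq_mul_of_sympForm_eq_zero hKi (by rwa [sympForm_single_left])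
    rw [measUpdate_apply, hi, zero_smul, add_zero]
    exact hM.of_measurement_rule hm hKi hi (h₃ hcomm) (h₄ hcomm)
  · have hanti := hM.mul_eq_neg_mul_of_sympForm_eq_one hKi (by rwa [sympForm_single_left])
    rw [measUpdate_apply, hi, one_smul, add_comm]
    refine hM.of_measurement_rule hm (hKa.mul hKi) ?_ (by simpa only [mul_assoc] using h₁ hanti)
      (by simpa only [mul_assoc] using h₂ hanti)
    rw [Pi.add_apply, symp_add_right, ha, hi]
    rfl

end Measurement

section SupportSplit

variable {κ ι : Type*} [DecidableEq κ]

def HasSupportSplit (v : κ → ι → PauliLabel) (c : Finset κ) : Prop :=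
  ∃ α β : Finset κ, α.Nonempty ∧ β.Nonempty ∧ Disjoint α β ∧ α ∪ β = c ∧
    Disjoint (support (∑ i ∈ α, v i)) (support (∑ i ∈ β, v i))

lemma isTrivial_iff_hasSupportSplit {n : ℕ} {K : Fin n → QOp (Fin n)}
    {v : Fin n → Fin n → PauliLabel} {c : Finset (Fin n)}
    (h : ∀ i ∈ c, HasPauliVec (K i) (v i)) : IsTrivial K c ↔ HasSupportSplit v c := by
  have hvec : ∀ s ⊆ c, HasPauliVec (stabProd K s) (∑ i ∈ s, v i) :=
    fun s hs => HasPauliVec.stabProd fun i hi => h i (hs hi)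
  have key : ∀ α β, α ∪ β = c → (qsupp (stabProd K α) ∩ qsupp (stabProd K β) = ∅ ↔
      Disjoint (support (∑ i ∈ α, v i)) (support (∑ i ∈ β, v i))) := fun α β hc => by
    rw [(hvec α (hc ▸ Finset.subset_union_left)).qsupp_eq,
      (hvec β (hc ▸ Finset.subset_union_right)).qsupp_eq, Set.disjoint_iff_inter_eq_empty]
  exact exists₂_congr fun α β =>
    ⟨fun ⟨hα, hβ, hαβ, hc, hs⟩ => ⟨hα, hβ, hαβ, hc, (key α β hc).1 hs⟩,
      fun ⟨hα, hβ, hαβ, hc, hs⟩ => ⟨hα, hβ, hαβ, hc, (key α β hc).2 hs⟩⟩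

variable [DecidableEq ι] {v : κ → ι → PauliLabel} {c : Finset κ} {a : κ} {m : PauliLabel} {q : ι}

lemma hasSupportSplit_measUpdate_of_mem_left {α β : Finset κ} (hac : a ∉ c)
    (ha : symp m (v a q) = 1) (hc : symp m ((∑ i ∈ c, v i) q) = 1) (haα : a ∈ α)
    (hβ : β.Nonempty) (hαβ : Disjoint α β) (hun : α ∪ β = insert a c)
    (hsupp : Disjoint (support (∑ i ∈ α, v i)) (support (∑ i ∈ β, v i))) :
    HasSupportSplit (fun i => measUpdate m q (v a) (v i)) c := by
  have hunc : α.erase a ∪ β = c := by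
    rw [← Finset.erase_eq_of_notMem (Finset.disjoint_left.mp hαβ haα),
      ← Finset.erase_union_distrib, hun, Finset.erase_insert hac]
  have hsumα : ∑ i ∈ α, v i = v a + ∑ i ∈ α.erase a, v i := (Finset.add_sum_erase α v haα).symm
  have hsumc : ∑ i ∈ c, v i = ∑ i ∈ α.erase a, v i + ∑ i ∈ β, v i := by
    rw [← hunc, Finset.sum_union (hαβ.mono_left (Finset.erase_subset a α))]
  -- The anticommutation parities of `S_α` and `S_β` add up to that of `K_a S_c`, which is even,
  -- and one of them vanishes because the two supports cannot both contain `q`.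
  have htotal : symp m ((∑ i ∈ α, v i) q) + symp m ((∑ i ∈ β, v i) q) = 0 := by
    rw [hsumα, Pi.add_apply, symp_add_right, ha, add_assoc, ← symp_add_right, ← Pi.add_apply,
      ← hsumc, hc]
    rfl
  have hβ0 : symp m ((∑ i ∈ β, v i) q) = 0 := by
    rcases symp_eq_zero_or_of_disjoint_support hsupp m q with h | h
    · rwa [h, zero_add] at htotal
    · exact h
  have hα'1 : symp m ((∑ i ∈ α.erase a, v i) q) = 1 := by
    rwa [hsumc, Pi.add_apply, symp_add_right, hβ0, add_zero] at hc
  have hα' : (α.erase a).Nonempty :=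
    Finset.nonempty_iff_ne_empty.mpr fun h => by simp [h] at hα'1
  refine ⟨α.erase a, β, hα', hβ, hαβ.mono_left (Finset.erase_subset a α), hunc, ?_⟩
  simp only [← map_sum]
  refine hsupp.mono ?_ (support_measUpdate_subset_of_symp_eq_zero _ hβ0)
  rw [hsumα, add_comm]
  exact support_measUpdate_subset_of_symp_eq_one _ hα'1

lemma HasSupportSplit.measUpdate (hac : a ∉ c) (ha : symp m (v a q) = 1)
    (hc : HasSupportSplit v c) (hca : HasSupportSplit v (insert a c)) :
    HasSupportSplit (fun i => measUpdate m q (v a) (v i)) c := by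
  obtain ⟨γ, δ, hγ, hδ, hγδ, hγδc, hsupp⟩ := hc
  by_cases h0 : symp m ((∑ i ∈ γ, v i) q) = 0 ∧ symp m ((∑ i ∈ δ, v i) q) = 0
  · refine ⟨γ, δ, hγ, hδ, hγδ, hγδc, ?_⟩
    simp only [← map_sum]
    exact hsupp.mono (support_measUpdate_subset_of_symp_eq_zero _ h0.1)
      (support_measUpdate_subset_of_symp_eq_zero _ h0.2)
  have hc : symp m ((∑ i ∈ c, v i) q) = 1 := by
    rw [← hγδc, Finset.sum_union hγδ, Pi.add_apply, symp_add_right]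
    rcases symp_eq_zero_or_of_disjoint_support hsupp m q with h | h
    · rw [h, zero_add]
      exact (symp m _).two_cases.resolve_left fun h' => h0 ⟨h, h'⟩
    · rw [h, add_zero]
      exact (symp m _).two_cases.resolve_left fun h' => h0 ⟨h', h⟩
  obtain ⟨α, β, hα, hβ, hαβ, hun, hsuppαβ⟩ := hca
  rcases Finset.mem_union.mp (hun ▸ Finset.mem_insert_self a c) with haα | haβ
  · exact hasSupportSplit_measUpdate_of_mem_left hac ha hc haα hβ hαβ hun hsuppαβ
  · exact hasSupportSplit_measUpdate_of_mem_left hac ha hc haβ hα hαβ.symm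
      (by rwa [Finset.union_comm]) hsuppαβ.symm

end SupportSplit

theorem newly_nontrivial_after_measurement_general {n : ℕ}
    (K : Fin n → QOp (Fin n)) (hPauli : ∀ i, IsPauliTensor (K i))
    (M : QOp (Fin n)) (hM : IsPauliTensor M)
    (q : Fin n) (hMsupp : qsupp M = {q})
    (a : Fin n) (hanti : M * K a = -(K a * M))
    (K' : Fin n → QOp (Fin n))
    (hK'1 : ∀ i, i ≠ a → M * K i = -(K i * M) → q ∈ qsupp (M * K a * K i) →
      K' i = K a * K i)
    (hK'2 : ∀ i, i ≠ a → M * K i = -(K i * M) → q ∉ qsupp (M * K a * K i) →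
      K' i = M * (K a * K i))
    (hK'3 : ∀ i, i ≠ a → M * K i = K i * M → q ∈ qsupp (M * K i) →
      K' i = K i)
    (hK'4 : ∀ i, i ≠ a → M * K i = K i * M → q ∉ qsupp (M * K i) →
      K' i = M * K i) :
    ∀ c : Finset (Fin n), a ∉ c →
      IsTrivial K c → ¬ IsTrivial K' c → ¬ IsTrivial K (insert a c) := by
  intro c hac hc hc' hca
  obtain ⟨μ, hμ⟩ := hM.exists_hasPauliVec
  choose v hv using fun i => (hPauli i).exists_hasPauliVec
  have hμ_supp : support μ = {q} := hμ.qsupp_eq ▸ hMsupp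
  have hμq : μ q ≠ 0 := mem_support.mp (hμ_supp ▸ Set.mem_singleton q)
  rw [eq_pi_single_of_support_subset hμ_supp.subset] at hμ
  have ha : symp (μ q) (v a q) = 1 := by
    simpa [sympForm_single_left] using hμ.sympForm_eq_one_of_mul_eq_neg_mul (hv a) hanti
  have hv' : ∀ i ∈ c, HasPauliVec (K' i) (measUpdate (μ q) q (v a) (v i)) := fun i hi =>
    have hia : i ≠ a := fun h => hac (h ▸ hi)
    hμ.measurement_update hμq (hv a) (hv i) ha (hK'1 i hia) (hK'2 i hia) (hK'3 i hia) (hK'4 i hia)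
  exact hc' <| (isTrivial_iff_hasSupportSplit hv').2 <| HasSupportSplit.measUpdate hac ha
    ((isTrivial_iff_hasSupportSplit fun i _ => hv i).1 hc)
    ((isTrivial_iff_hasSupportSplit fun i _ => hv i).1 hca)

/-- (New non-trivial stabilizers after a single-qubit measurement.)
Under the measurement-update rules for a single-qubit Pauli measurement `M` on qubit `q`
with anticommuting generator `K a`: for every combination `c` with `a ∉ c`, if `S_c` is
trivial w.r.t. the original generators but `S_c'` is non-trivial w.r.t. the updated
generators, then `S_{c ∪ {a}}` is non-trivial w.r.t. the original generators. -/
theorem newly_nontrivial_after_measurement {n : ℕ}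
    (K : Fin n → QOp (Fin n)) (hPauli : ∀ i, IsPauliTensor (K i))
    (hcomm : ∀ i j, Commute (K i) (K j))
    (hherm : ∀ i, (K i)ᴴ = K i) (hsq : ∀ i, K i * K i = 1)
    (M : QOp (Fin n)) (hM : IsPauliTensor M) (hMherm : Mᴴ = M) (hMsq : M * M = 1)
    (q : Fin n) (hMsupp : qsupp M = {q})
    (a : Fin n) (hanti : M * K a = -(K a * M))
    (K' : Fin n → QOp (Fin n))
    (hK'a : K' a = M)
    (hK'1 : ∀ i, i ≠ a → M * K i = -(K i * M) → q ∈ qsupp (M * K a * K i) →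
      K' i = K a * K i)
    (hK'2 : ∀ i, i ≠ a → M * K i = -(K i * M) → q ∉ qsupp (M * K a * K i) →
      K' i = M * (K a * K i))
    (hK'3 : ∀ i, i ≠ a → M * K i = K i * M → q ∈ qsupp (M * K i) →
      K' i = K i)
    (hK'4 : ∀ i, i ≠ a → M * K i = K i * M → q ∉ qsupp (M * K i) →
      K' i = M * K i) :
    ∀ c : Finset (Fin n), a ∉ c →
      IsTrivial K c → ¬ IsTrivial K' c → ¬ IsTrivial K (insert a c) :=
  newly_nontrivial_after_measurement_general K hPauli M hM q hMsupp a hanti K' hK'1 hK'2 hK'3 hK'4
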